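/- Let N ≥ 1 and let σ_N be the uniform probability measure on the unit sphere S^{N−1} ⊂ ℝ^N. Let O be an N×N real symmetric positive semidefinite matrix with distinct eigenvalues λ_1,…,λ_G ≥ 0 of multiplicities m_1,…,m_G ≥ 1 (m_1 + ⋯ + m_G = N), let m_min = min_i m_i, and for t ≥ 1 let μ_t(O) = ∫_{S^{N−1}} (ψᵀ O ψ)^t dσ_N(ψ). Then μ_t(O) ≤ (Tr(O)/N)^t · ∏_{j=0}^{t−1} (1 + 2j/m_min). (This is an exact, nonasymptotic form of the upper bound of Corollary 4, which bounds μ_t(O)/(Tr(O)/N)^t by 1 plus correction terms controlled by t and the smallest eigenvalue multiplicity.) -/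

import Mathlib

/-!
Write `S(ψ) = ∑ₖ dₖ ψₖ²` for the quadratic form of `O` in its eigenbasis; as `σ` is invariant
under `ψ ↦ Qᵀψ`, the moments of `ψᵀ O ψ` are those of `S`. Rotations of the `(i, j)`-plane also
preserve `σ`, so integrating over a full turn shows that the derivative of `ψᵢ ψⱼ S(ψ)ⁿ` along
them has integral zero. Weighting these identities by `dᵢ` and summing over `i, j` gives
`N 𝔼[Sⁿ⁺¹] = (∑ dₖ) 𝔼[Sⁿ] + 2n 𝔼[(∑ dₖ² ψₖ² - S²) Sⁿ⁻¹]`, and `∑ dₖ² ψₖ² ≤ Λ S` for any bound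
`Λ ≥ dₖ` yields `N 𝔼[Sⁿ⁺¹] ≤ (∑ dₖ + 2nΛ) 𝔼[Sⁿ]`. Every eigenvalue occurs at least `m_min` times,
so `dₖ ≤ Tr(O) / m_min`, and the bound follows by induction on `t`.
-/

open MeasureTheory Matrix Finset

noncomputable section

/-- The map induced on the unit sphere by a linear isometry equivalence of `ℝ^N`. -/
def sphereMap {N : ℕ} (f : EuclideanSpace ℝ (Fin N) ≃ₗᵢ[ℝ] EuclideanSpace ℝ (Fin N)) :
    Metric.sphere (0 : EuclideanSpace ℝ (Fin N)) 1 →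
      Metric.sphere (0 : EuclideanSpace ℝ (Fin N)) 1 :=
  fun ψ => ⟨f ψ, by
    rw [mem_sphere_zero_iff_norm, f.norm_map]
    exact mem_sphere_zero_iff_norm.mp ψ.2⟩

/-- `σ` is the uniform (rotation-invariant) probability measure on the unit sphere
`S^{N-1} ⊂ ℝ^N`. -/
def IsUniformSphereMeasure {N : ℕ}
    (σ : Measure (Metric.sphere (0 : EuclideanSpace ℝ (Fin N)) 1)) : Prop :=
  IsProbabilityMeasure σ ∧
    ∀ f : EuclideanSpace ℝ (Fin N) ≃ₗᵢ[ℝ] EuclideanSpace ℝ (Fin N),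
      Measure.map (sphereMap f) σ = σ

open Real

theorem integral_eq_zero_of_hasDerivAt_periodic_flow {X : Type*} [TopologicalSpace X]
    [CompactSpace X] [MeasurableSpace X] [BorelSpace X] (σ : Measure X) [IsFiniteMeasure σ]
    (Φ : ℝ → X → X) (hΦ : Continuous fun p : ℝ × X => Φ p.1 p.2)
    (hσ : ∀ θ, σ.map (Φ θ) = σ) {T : ℝ} (hT : 0 < T) (hper : Φ T = Φ 0)
    {F F' : X → ℝ} (hF' : Continuous F')
    (hderiv : ∀ x θ, HasDerivAt (fun θ => F (Φ θ x)) (F' (Φ θ x)) θ) :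
    ∫ x, F' x ∂σ = 0 := by
  have hF'Φ : Continuous fun p : ℝ × X => F' (Φ p.1 p.2) := hF'.comp hΦ
  have hinvariant : ∀ θ, ∫ x, F' (Φ θ x) ∂σ = ∫ x, F' x ∂σ := fun θ => by
    have hm : Measurable (Φ θ) := (hΦ.comp (Continuous.prodMk_right θ)).measurable
    rw [← integral_map hm.aemeasurable (hσ θ ▸ hF'.aestronglyMeasurable), hσ]
  have hperiod : ∀ x, ∫ θ in 0..T, F' (Φ θ x) = 0 := fun x => by
    rw [intervalIntegral.integral_eq_sub_of_hasDerivAt (fun θ _ => hderiv x θ)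
      ((hF'Φ.comp (Continuous.prodMk_left x)).intervalIntegrable _ _), hper, sub_self]
  obtain ⟨C, hC⟩ := (isCompact_range hF').isBounded.exists_norm_le
  have : IsFiniteMeasure (volume.restrict (Set.uIoc 0 T)) := Real.isFiniteMeasure_restrict_Ioc _ _
  have hint : Integrable (Function.uncurry fun θ x => F' (Φ θ x))
      ((volume.restrict (Set.uIoc 0 T)).prod σ) :=
    .of_bound hF'Φ.aestronglyMeasurable C (.of_forall fun p => hC _ ⟨_, rfl⟩)
  have hswap := intervalIntegral_integral_swap hint
  simp only [hinvariant, hperiod, intervalIntegral.integral_const, integral_zero, smul_eq_mul,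
    sub_zero] at hswap
  exact (mul_eq_zero.1 hswap).resolve_left hT.ne'

section DiagForm

variable {N : ℕ}

def diagForm (d : Fin N → ℝ) (x : EuclideanSpace ℝ (Fin N)) : ℝ := ∑ k, d k * x k ^ 2

@[fun_prop]
lemma continuous_diagForm (d : Fin N → ℝ) : Continuous (diagForm d) := by
  unfold diagForm; fun_prop

lemma diagForm_nonneg {d : Fin N → ℝ} (hd : ∀ k, 0 ≤ d k) (x : EuclideanSpace ℝ (Fin N)) :
    0 ≤ diagForm d x :=
  sum_nonneg fun k _ => mul_nonneg (hd k) (sq_nonneg _)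

lemma diagForm_one (x : EuclideanSpace ℝ (Fin N)) : diagForm 1 x = ‖x‖ ^ 2 := by
  simp [diagForm, EuclideanSpace.norm_sq_eq]

lemma diagForm_sq_le {d : Fin N → ℝ} {Λ : ℝ} (hd : ∀ k, 0 ≤ d k) (hdΛ : ∀ k, d k ≤ Λ)
    (x : EuclideanSpace ℝ (Fin N)) : diagForm (d ^ 2) x ≤ Λ * diagForm d x := by
  rw [diagForm, diagForm, mul_sum]
  refine sum_le_sum fun k _ => ?_
  rw [Pi.pow_apply, ← mul_assoc, sq]
  exact mul_le_mul_of_nonneg_right (mul_le_mul_of_nonneg_right (hdΛ k) (hd k)) (sq_nonneg _)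

lemma dotProduct_mulVec_conj_diagonal (Q : Matrix (Fin N) (Fin N) ℝ) (d : Fin N → ℝ)
    (x : Fin N → ℝ) : x ⬝ᵥ (Q * diagonal d * Qᵀ) *ᵥ x = diagForm d (WithLp.toLp 2 (Qᵀ *ᵥ x)) := by
  rw [← mulVec_mulVec, ← mulVec_mulVec, dotProduct_mulVec, ← mulVec_transpose]
  simp only [dotProduct, mulVec_diagonal, diagForm]
  exact sum_congr rfl fun k _ => by ring

end DiagForm

namespace EuclideanSpace

variable {N : ℕ} (i j : Fin N)

def planeRotation (θ : ℝ) : EuclideanSpace ℝ (Fin N) →ₗ[ℝ] EuclideanSpace ℝ (Fin N) where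
  toFun x := WithLp.toLp 2 fun k =>
    if k = i then cos θ * x i - sin θ * x j else if k = j then sin θ * x i + cos θ * x j else x k
  map_add' x y := by
    ext k
    simp only [PiLp.add_apply]
    split_ifs <;> ring
  map_smul' c x := by
    ext k
    simp only [PiLp.smul_apply, smul_eq_mul, RingHom.id_apply]
    split_ifs <;> ring

variable {i j}

lemma planeRotation_apply_left (θ : ℝ) (x : EuclideanSpace ℝ (Fin N)) :
    planeRotation i j θ x i = cos θ * x i - sin θ * x j := by
  simp [planeRotation]

lemma planeRotation_apply_right (hij : i ≠ j) (θ : ℝ) (x : EuclideanSpace ℝ (Fin N)) :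
    planeRotation i j θ x j = sin θ * x i + cos θ * x j := by
  simp [planeRotation, hij.symm]

lemma planeRotation_apply_of_ne {k : Fin N} (hki : k ≠ i) (hkj : k ≠ j) (θ : ℝ)
    (x : EuclideanSpace ℝ (Fin N)) : planeRotation i j θ x k = x k := by
  simp [planeRotation, hki, hkj]

lemma planeRotation_two_pi : planeRotation i j (2 * π) = planeRotation i j 0 := by
  ext x k
  simp [planeRotation]

lemma diagForm_planeRotation (hij : i ≠ j) (d : Fin N → ℝ) (θ : ℝ)
    (x : EuclideanSpace ℝ (Fin N)) :
    diagForm d (planeRotation i j θ x) =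
      diagForm d x + (d i - d j) * (planeRotation i j θ x i ^ 2 - x i ^ 2) := by
  have hpair : diagForm d (planeRotation i j θ x) - diagForm d x =
      d i * (planeRotation i j θ x i ^ 2 - x i ^ 2) +
        d j * (planeRotation i j θ x j ^ 2 - x j ^ 2) := by
    rw [diagForm, diagForm, ← sum_sub_distrib]
    refine (Fintype.sum_eq_add i j hij fun k hk => ?_).trans (by ring)
    rw [planeRotation_apply_of_ne hk.1 hk.2, sub_self]
  rw [planeRotation_apply_right hij, planeRotation_apply_left] at hpair
  rw [planeRotation_apply_left]
  linear_combination hpair + (d j * (x i ^ 2 + x j ^ 2)) * sin_sq_add_cos_sq θ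

lemma norm_planeRotation (hij : i ≠ j) (θ : ℝ) (x : EuclideanSpace ℝ (Fin N)) :
    ‖planeRotation i j θ x‖ = ‖x‖ := by
  have := diagForm_planeRotation hij 1 θ x
  simp only [Pi.one_apply, sub_self, zero_mul, add_zero, diagForm_one] at this
  exact (pow_left_inj₀ (norm_nonneg _) (norm_nonneg _) two_ne_zero).1 this

def planeRotationIso (hij : i ≠ j) (θ : ℝ) :
    EuclideanSpace ℝ (Fin N) ≃ₗᵢ[ℝ] EuclideanSpace ℝ (Fin N) :=
  LinearIsometry.toLinearIsometryEquiv ⟨planeRotation i j θ, norm_planeRotation hij θ⟩ rfl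

lemma continuous_planeRotation :
    Continuous fun p : ℝ × EuclideanSpace ℝ (Fin N) => planeRotation i j p.1 p.2 := by
  refine (PiLp.continuous_toLp 2 _).comp (continuous_pi fun k => ?_)
  dsimp only
  split_ifs <;> fun_prop

lemma hasDerivAt_planeRotation_apply_left (hij : i ≠ j) (θ : ℝ) (x : EuclideanSpace ℝ (Fin N)) :
    HasDerivAt (fun θ => planeRotation i j θ x i) (-planeRotation i j θ x j) θ := by
  simp only [planeRotation_apply_left, planeRotation_apply_right hij]
  exact (((hasDerivAt_cos θ).mul_const (x i)).sub ((hasDerivAt_sin θ).mul_const (x j))).congr_deriv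
    (by ring)

lemma hasDerivAt_planeRotation_apply_right (hij : i ≠ j) (θ : ℝ) (x : EuclideanSpace ℝ (Fin N)) :
    HasDerivAt (fun θ => planeRotation i j θ x j) (planeRotation i j θ x i) θ := by
  simp only [planeRotation_apply_left, planeRotation_apply_right hij]
  exact (((hasDerivAt_sin θ).mul_const (x i)).add ((hasDerivAt_cos θ).mul_const (x j))).congr_deriv
    (by ring)

end EuclideanSpace

def orthogonalIsometry {n : Type*} [Fintype n] [DecidableEq n] {A : Matrix n n ℝ}
    (hA : A ∈ orthogonalGroup n ℝ) : EuclideanSpace ℝ n ≃ₗᵢ[ℝ] EuclideanSpace ℝ n :=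
  Unitary.linearIsometryEquiv ⟨toEuclideanCLM (n := n) (𝕜 := ℝ) A, Unitary.map_mem _ hA⟩

section Sphere

open EuclideanSpace

variable {N : ℕ}

/-- The derivative of `x ↦ xᵢ xⱼ (diagForm d x)ⁿ` along the rotations of the `(i, j)`-plane. -/
def rotationDeriv (d : Fin N → ℝ) (n : ℕ) (i j : Fin N) (x : EuclideanSpace ℝ (Fin N)) : ℝ :=
  (x i ^ 2 - x j ^ 2) * diagForm d x ^ n -
    2 * n * (d i - d j) * x i ^ 2 * x j ^ 2 * diagForm d x ^ (n - 1)

@[fun_prop]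
lemma continuous_rotationDeriv (d : Fin N → ℝ) (n : ℕ) (i j : Fin N) :
    Continuous (rotationDeriv d n i j) := by
  unfold rotationDeriv; fun_prop

lemma hasDerivAt_rotationDeriv {i j : Fin N} (hij : i ≠ j) (d : Fin N → ℝ) (n : ℕ)
    (x : EuclideanSpace ℝ (Fin N)) (θ : ℝ) :
    HasDerivAt (fun θ => planeRotation i j θ x i * planeRotation i j θ x j *
        diagForm d (planeRotation i j θ x) ^ n)
      (rotationDeriv d n i j (planeRotation i j θ x)) θ := by
  have hu := hasDerivAt_planeRotation_apply_left hij θ x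
  have hv := hasDerivAt_planeRotation_apply_right hij θ x
  have hS : HasDerivAt (fun θ => diagForm d (planeRotation i j θ x))
      ((d i - d j) * (2 * planeRotation i j θ x i * -planeRotation i j θ x j)) θ := by
    simp only [diagForm_planeRotation hij d _ x]
    exact (((hu.fun_pow 2).sub_const _).const_mul _).const_add _ |>.congr_deriv (by ring)
  exact ((hu.fun_mul hv).fun_mul (hS.fun_pow n)).congr_deriv (by simp only [rotationDeriv]; ring)

lemma sum_sum_rotationDeriv (d : Fin N → ℝ) (n : ℕ) {x : EuclideanSpace ℝ (Fin N)}
    (hx : ‖x‖ = 1) :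
    ∑ i, ∑ j, d i * rotationDeriv d n i j x =
      (N * diagForm d x - ∑ k, d k) * diagForm d x ^ n -
        2 * n * (diagForm (d ^ 2) x - diagForm d x ^ 2) * diagForm d x ^ (n - 1) := by
  have ha : ∑ k, x k ^ 2 = 1 := by simpa [diagForm, hx] using diagForm_one x
  have hS : diagForm d x = ∑ k, d k * x k ^ 2 := rfl
  have hS2 : diagForm (d ^ 2) x = ∑ k, d k ^ 2 * x k ^ 2 := rfl
  set S := diagForm d x
  set P := S ^ n
  set R := S ^ (n - 1)
  have hinner : ∀ i, ∑ j, d i * rotationDeriv d n i j x =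
      N * (d i * x i ^ 2) * P - d i * P - 2 * n * (d i ^ 2 * x i ^ 2) * R +
        2 * n * (d i * x i ^ 2) * S * R := fun i =>
    calc ∑ j, d i * rotationDeriv d n i j x
        = ∑ j, (d i * x i ^ 2 * P - (d i * P + 2 * n * (d i ^ 2 * x i ^ 2) * R) * x j ^ 2
            + 2 * n * (d i * x i ^ 2) * R * (d j * x j ^ 2)) :=
          sum_congr rfl fun j _ => by simp only [rotationDeriv]; ring
      _ = _ := by
          rw [sum_add_distrib, sum_sub_distrib, sum_const, ← mul_sum, ← mul_sum, ha, ← hS]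
          simp only [card_univ, Fintype.card_fin, nsmul_eq_mul]
          ring
  rw [sum_congr rfl fun i _ => hinner i, hS2]
  simp only [sum_add_distrib, sum_sub_distrib, ← sum_mul, ← mul_sum, ← hS]
  ring

lemma continuous_sphereMap (f : EuclideanSpace ℝ (Fin N) ≃ₗᵢ[ℝ] EuclideanSpace ℝ (Fin N)) :
    Continuous (sphereMap f) :=
  (f.continuous.comp continuous_subtype_val).subtype_mk _

variable {σ : Measure (Metric.sphere (0 : EuclideanSpace ℝ (Fin N)) 1)}

namespace IsUniformSphereMeasure

lemma integrable (hσ : IsUniformSphereMeasure σ)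
    {g : Metric.sphere (0 : EuclideanSpace ℝ (Fin N)) 1 → ℝ} (hg : Continuous g) : Integrable g σ :=
  have := hσ.1
  hg.integrable_of_hasCompactSupport (.of_compactSpace g)

lemma integral_comp (hσ : IsUniformSphereMeasure σ)
    (f : EuclideanSpace ℝ (Fin N) ≃ₗᵢ[ℝ] EuclideanSpace ℝ (Fin N))
    {g : Metric.sphere (0 : EuclideanSpace ℝ (Fin N)) 1 → ℝ} (hg : Continuous g) :
    ∫ ψ, g (sphereMap f ψ) ∂σ = ∫ ψ, g ψ ∂σ := by
  rw [← integral_map (continuous_sphereMap f).aemeasurable (hσ.2 f ▸ hg.aestronglyMeasurable),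
    hσ.2 f]

lemma integral_rotationDeriv (hσ : IsUniformSphereMeasure σ) (d : Fin N → ℝ) (n : ℕ)
    (i j : Fin N) : ∫ ψ, rotationDeriv d n i j ψ ∂σ = 0 := by
  rcases eq_or_ne i j with rfl | hij
  · simp [rotationDeriv]
  have := hσ.1
  refine integral_eq_zero_of_hasDerivAt_periodic_flow σ
    (fun θ => sphereMap (planeRotationIso hij θ)) ?_ (fun θ => hσ.2 _) two_pi_pos ?_
    (F := fun ψ => ψ.1 i * ψ.1 j * diagForm d ψ ^ n) (by fun_prop)
    (fun ψ θ => hasDerivAt_rotationDeriv hij d n ψ θ)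
  · exact (continuous_planeRotation.comp
      (continuous_fst.prodMk (continuous_subtype_val.comp continuous_snd))).subtype_mk _
  · funext ψ
    exact Subtype.ext (congrArg (· ψ.1) planeRotation_two_pi)

lemma integral_moment_identity (hσ : IsUniformSphereMeasure σ) (d : Fin N → ℝ) (n : ℕ) :
    ∫ ψ, ((N * diagForm d ψ - ∑ k, d k) * diagForm d ψ ^ n -
      2 * n * (diagForm (d ^ 2) ψ - diagForm d ψ ^ 2) * diagForm d ψ ^ (n - 1)) ∂σ = 0 := by
  have hint : ∀ i j, Integrable (fun ψ : Metric.sphere (0 : EuclideanSpace ℝ (Fin N)) 1 =>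
      d i * rotationDeriv d n i j ψ) σ := fun i j =>
    hσ.integrable (by fun_prop)
  rw [← integral_congr_ae (.of_forall fun ψ =>
    sum_sum_rotationDeriv d n (mem_sphere_zero_iff_norm.1 ψ.2)),
    integral_finsetSum _ fun i _ => integrable_finsetSum _ fun j _ => hint i j]
  refine sum_eq_zero fun i _ => ?_
  rw [integral_finsetSum _ fun j _ => hint i j]
  exact sum_eq_zero fun j _ => by rw [integral_const_mul, hσ.integral_rotationDeriv, mul_zero]

lemma mul_integral_diagForm_pow_succ_le (hσ : IsUniformSphereMeasure σ) {d : Fin N → ℝ} {Λ : ℝ}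
    (hd : ∀ k, 0 ≤ d k) (hdΛ : ∀ k, d k ≤ Λ) (n : ℕ) :
    N * ∫ ψ, diagForm d ψ ^ (n + 1) ∂σ ≤ (∑ k, d k + 2 * n * Λ) * ∫ ψ, diagForm d ψ ^ n ∂σ := by
  have hpt : ∀ ψ : Metric.sphere (0 : EuclideanSpace ℝ (Fin N)) 1,
      N * diagForm d ψ ^ (n + 1) - (∑ k, d k + 2 * n * Λ) * diagForm d ψ ^ n ≤
        (N * diagForm d ψ - ∑ k, d k) * diagForm d ψ ^ n -
          2 * n * (diagForm (d ^ 2) ψ - diagForm d ψ ^ 2) * diagForm d ψ ^ (n - 1) := by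
    intro ψ
    rcases n with _ | n
    · simp
    set S := diagForm d ψ
    rw [← sub_nonneg, Nat.add_sub_cancel]
    have hS2 := diagForm_sq_le hd hdΛ ψ
    calc (0 : ℝ) ≤ 2 * (n + 1) * ((Λ * S - diagForm (d ^ 2) ψ + S ^ 2) * S ^ n) := by
          have := diagForm_nonneg hd ψ
          have := sq_nonneg S
          exact mul_nonneg (by positivity) (mul_nonneg (by linarith) (by positivity))
      _ = _ := by push_cast; ring
  have hmono := integral_mono (hσ.integrable (by fun_prop)) (hσ.integrable (by fun_prop)) hpt
  rw [hσ.integral_moment_identity, integral_sub (hσ.integrable (by fun_prop))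
    (hσ.integrable (by fun_prop)), integral_const_mul, integral_const_mul] at hmono
  linarith

lemma integral_diagForm_pow_le (hσ : IsUniformSphereMeasure σ) (hN : 0 < N) {d : Fin N → ℝ}
    {Λ : ℝ} (hd : ∀ k, 0 ≤ d k) (hdΛ : ∀ k, d k ≤ Λ) (t : ℕ) :
    ∫ ψ, diagForm d ψ ^ t ∂σ ≤ ∏ j ∈ range t, (∑ k, d k + 2 * j * Λ) / N := by
  have := hσ.1
  induction t with
  | zero => simp
  | succ t ih =>
    have hΛ : 0 ≤ Λ := (hd ⟨0, hN⟩).trans (hdΛ _)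
    have hc : 0 ≤ (∑ k, d k + 2 * t * Λ) / N := by
      have := sum_nonneg fun k (_ : k ∈ univ) => hd k
      positivity
    calc ∫ ψ, diagForm d ψ ^ (t + 1) ∂σ
        ≤ (∑ k, d k + 2 * t * Λ) / N * ∫ ψ, diagForm d ψ ^ t ∂σ := by
          rw [div_mul_eq_mul_div, le_div_iff₀ (Nat.cast_pos.2 hN), mul_comm]
          exact hσ.mul_integral_diagForm_pow_succ_le hd hdΛ t
      _ ≤ (∑ k, d k + 2 * t * Λ) / N * ∏ j ∈ range t, (∑ k, d k + 2 * j * Λ) / N :=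
          mul_le_mul_of_nonneg_left ih hc
      _ = ∏ j ∈ range (t + 1), (∑ k, d k + 2 * j * Λ) / N := by rw [prod_range_succ, mul_comm]

lemma integral_comp_dotProduct_conj_diagonal (hσ : IsUniformSphereMeasure σ)
    {Q : Matrix (Fin N) (Fin N) ℝ} (hQ : Q * Qᵀ = 1) (d : Fin N → ℝ) {g : ℝ → ℝ}
    (hg : Continuous g) :
    ∫ ψ, g ((ψ : EuclideanSpace ℝ (Fin N)) ⬝ᵥ (Q * diagonal d * Qᵀ) *ᵥ
        (ψ : EuclideanSpace ℝ (Fin N))) ∂σ = ∫ ψ, g (diagForm d ψ) ∂σ := by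
  have hQ' : Qᵀ ∈ orthogonalGroup (Fin N) ℝ := by
    rw [mem_orthogonalGroup_iff, transpose_transpose]
    exact mul_eq_one_comm.1 hQ
  simp only [dotProduct_mulVec_conj_diagonal]
  exact hσ.integral_comp (orthogonalIsometry hQ') (g := fun ψ => g (diagForm d ψ)) (by fun_prop)

end IsUniformSphereMeasure

end Sphere

lemma card_filter_eq_mul_le_sum {ι : Type*} [Fintype ι] {d : ι → ℝ} (hd : ∀ k, 0 ≤ d k)
    (c : ℝ) : (univ.filter fun j => d j = c).card * c ≤ ∑ j, d j :=
  calc (univ.filter fun j => d j = c).card * c = ∑ j ∈ univ.filter fun j => d j = c, d j := by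
        rw [sum_congr rfl fun j hj => (mem_filter.1 hj).2, sum_const, nsmul_eq_mul]
    _ ≤ ∑ j, d j := sum_le_sum_of_subset_of_nonneg (subset_univ _) fun j _ _ => hd j

lemma trace_conj_diagonal {N : ℕ} {Q : Matrix (Fin N) (Fin N) ℝ} (hQ : Q * Qᵀ = 1)
    (d : Fin N → ℝ) : (Q * diagonal d * Qᵀ).trace = ∑ k, d k := by
  rw [trace_mul_cycle, mul_eq_one_comm.1 hQ, one_mul, trace_diagonal]

theorem haar_moment_upper_bound_general (N G : ℕ) (hN : 1 ≤ N) (hG : 0 < G)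
    (σ : Measure (Metric.sphere (0 : EuclideanSpace ℝ (Fin N)) 1))
    (hσ : IsUniformSphereMeasure σ)
    (O : Matrix (Fin N) (Fin N) ℝ)
    (lam : Fin G → ℝ) (m : Fin G → ℕ)
    (hlam_nonneg : ∀ g, 0 ≤ lam g)
    (hm : ∀ g, 1 ≤ m g)
    (d : Fin N → ℝ) (Q : Matrix (Fin N) (Fin N) ℝ) (hQ : Q * Qᵀ = 1)
    (hO : O = Q * Matrix.diagonal d * Qᵀ)
    (hd : ∀ j, ∃ g, d j = lam g)
    (hmult : ∀ g, (Finset.univ.filter (fun j => d j = lam g)).card = m g)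
    (t : ℕ) :
    ∫ ψ, ((ψ : EuclideanSpace ℝ (Fin N)) ⬝ᵥ
        O.mulVec (ψ : EuclideanSpace ℝ (Fin N))) ^ t ∂σ ≤
      (O.trace / N) ^ t *
        ∏ j ∈ Finset.range t,
          (1 + 2 * (j : ℝ) /
            ((Finset.univ.inf' ⟨(⟨0, hG⟩ : Fin G), Finset.mem_univ _⟩ m : ℕ) : ℝ)) := by
  set μ := univ.inf' ⟨(⟨0, hG⟩ : Fin G), mem_univ _⟩ m
  have hμ : (0 : ℝ) < μ := Nat.cast_pos.2 (le_inf' _ _ fun g _ => hm g)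
  have hd0 : ∀ k, 0 ≤ d k := fun k => (hd k).elim fun g hg => hg ▸ hlam_nonneg g
  have hdμ : ∀ k, d k ≤ (∑ k, d k) / μ := fun k => by
    obtain ⟨g, hg⟩ := hd k
    rw [le_div_iff₀ hμ, hg, mul_comm]
    calc μ * lam g ≤ m g * lam g :=
          mul_le_mul_of_nonneg_right (Nat.cast_le.2 (inf'_le _ (mem_univ g))) (hlam_nonneg g)
      _ ≤ ∑ k, d k := hmult g ▸ card_filter_eq_mul_le_sum hd0 (lam g)
  subst hO
  calc ∫ ψ, ((ψ : EuclideanSpace ℝ (Fin N)) ⬝ᵥ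
        (Q * diagonal d * Qᵀ) *ᵥ (ψ : EuclideanSpace ℝ (Fin N))) ^ t ∂σ
      = ∫ ψ, diagForm d ψ ^ t ∂σ :=
        hσ.integral_comp_dotProduct_conj_diagonal hQ d (continuous_pow t)
    _ ≤ ∏ j ∈ range t, (∑ k, d k + 2 * j * ((∑ k, d k) / μ)) / N :=
        hσ.integral_diagForm_pow_le hN hd0 hdμ t
    _ = ∏ j ∈ range t, ((∑ k, d k) / N * (1 + 2 * (j : ℝ) / μ)) :=
        prod_congr rfl fun j _ => by ring
    _ = ((Q * diagonal d * Qᵀ).trace / N) ^ t * ∏ j ∈ range t, (1 + 2 * (j : ℝ) / μ) := by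
        rw [prod_mul_distrib, prod_const, card_range, trace_conj_diagonal hQ]

/-- nonasymptotic upper bound on the `t`-th Haar moment of a positive semidefinite
observable with distinct eigenvalues `lam g` of multiplicities `m g`:
`μ_t(O) ≤ (Tr(O)/N)^t · ∏_{j=0}^{t-1} (1 + 2j/m_min)` where `m_min = min_g m g`. -/
theorem haar_moment_upper_bound (N G : ℕ) (hN : 1 ≤ N) (hG : 0 < G)
    (σ : Measure (Metric.sphere (0 : EuclideanSpace ℝ (Fin N)) 1))
    (hσ : IsUniformSphereMeasure σ)
    (O : Matrix (Fin N) (Fin N) ℝ) (hpsd : O.PosSemidef)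
    (lam : Fin G → ℝ) (m : Fin G → ℕ)
    (hlam_nonneg : ∀ g, 0 ≤ lam g) (hlam_inj : Function.Injective lam)
    (hm : ∀ g, 1 ≤ m g) (hmsum : ∑ g, m g = N)
    (d : Fin N → ℝ) (Q : Matrix (Fin N) (Fin N) ℝ) (hQ : Q * Qᵀ = 1)
    (hO : O = Q * Matrix.diagonal d * Qᵀ)
    (hd : ∀ j, ∃ g, d j = lam g)
    (hmult : ∀ g, (Finset.univ.filter (fun j => d j = lam g)).card = m g)
    (t : ℕ) (ht : 1 ≤ t) :
    ∫ ψ, ((ψ : EuclideanSpace ℝ (Fin N)) ⬝ᵥ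
        O.mulVec (ψ : EuclideanSpace ℝ (Fin N))) ^ t ∂σ ≤
      (O.trace / N) ^ t *
        ∏ j ∈ Finset.range t,
          (1 + 2 * (j : ℝ) /
            ((Finset.univ.inf' ⟨(⟨0, hG⟩ : Fin G), Finset.mem_univ _⟩ m : ℕ) : ℝ)) :=
  haar_moment_upper_bound_general N G hN hG σ hσ O lam m hlam_nonneg hm d Q hQ hO hd hmult t

end
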